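/- If f ∈ C(K) vanishes identically on ∂U, then the sequence {Ψ^n(f)}_{n≥1} converges uniformly on K to 0; equivalently, {Φ^n(f_U)}_{n≥1} converges uniformly on U to 0. -/

import Mathlib

open MeasureTheory Filter Topology ComplexOrder

/-- `Φ` is a Markov operator on the bounded Borel measurable functions on `U`:
for each `x` there is a Borel probability measure `P x` representing `Φ` at `x`. -/
def IsMarkovOperator {U : Type*} [MeasurableSpace U]
    (Φ : (U → ℂ) → (U → ℂ)) : Prop :=
  ∀ x : U, ∃ P : Measure U, IsProbabilityMeasure P ∧
    ∀ f : U → ℂ, Measurable f → (∃ C : ℝ, ∀ y, ‖f y‖ ≤ C) →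
      Φ f x = ∫ y, f y ∂P

/-- `Φ` has the strong Feller property: it maps bounded Borel measurable
functions to continuous functions. -/
def HasStrongFeller {U : Type*} [MeasurableSpace U] [TopologicalSpace U]
    (Φ : (U → ℂ) → (U → ℂ)) : Prop :=
  ∀ f : U → ℂ, Measurable f → (∃ C : ℝ, ∀ y, ‖f y‖ ≤ C) → Continuous (Φ f)

/-- Boundary condition (A): for each boundary point `x` there is a barrier
`h ∈ C(K)` with `h x = 0`, `h < 0` off `x`, and `Φ (h_U) ≥ h_U` on `U`. -/
def CondA {K : Type*} [TopologicalSpace K] (U : Set K)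
    (Φ : (↥U → ℂ) → (↥U → ℂ)) : Prop :=
  ∀ x ∈ Uᶜ, ∃ h : C(K, ℂ), h x = 0 ∧ (∀ y : K, y ≠ x → h y < 0) ∧
    ∀ u : ↥U, h u.1 ≤ Φ (fun v : ↥U => h v.1) u

/-- Maximum principle (B): every real-valued `g ∈ C(K)` with `Φ (g_U) ≥ g_U`
on `U` attaining its global maximum inside `U` is constant. -/
def CondB {K : Type*} [TopologicalSpace K] (U : Set K)
    (Φ : (↥U → ℂ) → (↥U → ℂ)) : Prop :=
  ∀ g : C(K, ℂ), (∀ x : K, (g x).im = 0) →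
    (∀ u : ↥U, g u.1 ≤ Φ (fun v : ↥U => g v.1) u) →
    (∃ z ∈ U, ∀ x : K, g x ≤ g z) →
    ∀ x y : K, g x = g y

/-- The map `Ψ` : `Ψ f = Φ (f_U)` on `U` and `Ψ f = f` on `∂U = K \ U`. -/
noncomputable def psiFun {K : Type*} (U : Set K)
    (Φ : (↥U → ℂ) → (↥U → ℂ)) (f : K → ℂ) : K → ℂ :=
  open Classical in fun x => if hx : x ∈ U then Φ (fun v : ↥U => f v.1) ⟨x, hx⟩ else f x

/-!
Write `Φ g x = ∫ g ∂Pₓ` and let `T` be the same averaging operator on real functions. Barriers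
from (A), rescaled and minimised over a finite cover of the compact boundary, give for every
`ε, δ > 0` a nonnegative `T`-superharmonic `w ∈ C(K)` with `w ≥ 1` where `‖f‖ ≥ ε` and `w < δ`
on `∂U`; then `g = ε + ‖f‖ w` dominates `‖f‖` on `U`, so `‖Φⁿ f_U‖ ≤ Tⁿ g`. The iterates `Tⁿ g`
are continuous (strong Feller) and decrease to a limit `L` with `T L = L`, hence continuous.
Since `g < c := 2ε` near `∂U`, `max L c`, extended by `c` across `∂U`, is a continuous
subharmonic function; by (B) its maximum is its boundary value `c`, so `L ≤ c`. Dini's theorem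
then makes `Tⁿ g ≤ 3ε` hold uniformly for large `n`.
-/

noncomputable def kernelAverage {X : Type*} [MeasurableSpace X] (P : X → Measure X)
    (r : X → ℝ) (x : X) : ℝ :=
  ∫ y, r y ∂P x

def IsKernelOf {X : Type*} [MeasurableSpace X] (P : X → Measure X)
    (Φ : (X → ℂ) → (X → ℂ)) : Prop :=
  ∀ (x : X) (f : X → ℂ), Measurable f → (∃ C : ℝ, ∀ y, ‖f y‖ ≤ C) → Φ f x = ∫ y, f y ∂P x

theorem IsMarkovOperator.exists_kernel {X : Type*} [MeasurableSpace X]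
    {Φ : (X → ℂ) → (X → ℂ)} (hΦ : IsMarkovOperator Φ) :
    ∃ P : X → Measure X, (∀ x, IsProbabilityMeasure (P x)) ∧ IsKernelOf P Φ := by
  choose P hP using hΦ
  exact ⟨P, fun x => (hP x).1, fun x => (hP x).2⟩

section Kernel

variable {X : Type*} [MeasurableSpace X] {P : X → Measure X} {Φ : (X → ℂ) → (X → ℂ)}
  {r s : X → ℝ} {C : ℝ}

theorem kernelAverage_const_mul (a : ℝ) :
    kernelAverage P (fun y => a * r y) = fun x => a * kernelAverage P r x :=
  funext fun _ => integral_const_mul a _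

theorem kernelAverage_mono (hr : ∀ x, Integrable r (P x)) (hs : ∀ x, Integrable s (P x))
    (hrs : r ≤ s) : kernelAverage P r ≤ kernelAverage P s :=
  fun x => integral_mono (hr x) (hs x) hrs

theorem IsKernelOf.apply_ofReal (hK : IsKernelOf P Φ) (hr : Measurable r)
    (hb : ∀ y, ‖r y‖ ≤ C) (x : X) :
    Φ (fun y => (r y : ℂ)) x = kernelAverage P r x := by
  rw [hK x _ (by fun_prop) ⟨C, fun y => by simpa using hb y⟩]
  exact integral_ofReal

theorem IsKernelOf.continuous_kernelAverage [TopologicalSpace X] (hK : IsKernelOf P Φ)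
    (hSF : HasStrongFeller Φ) (hr : Measurable r) (hb : ∀ y, ‖r y‖ ≤ C) :
    Continuous (kernelAverage P r) := by
  have h := Complex.continuous_re.comp
    (hSF (fun y => (r y : ℂ)) (by fun_prop) ⟨C, fun y => by simpa using hb y⟩)
  simpa [Function.comp_def, hK.apply_ofReal hr hb] using h

variable [∀ x, IsProbabilityMeasure (P x)]

theorem integrable_of_norm_le (hr : Measurable r) (hb : ∀ y, ‖r y‖ ≤ C) (x : X) :
    Integrable r (P x) :=
  .of_bound hr.aestronglyMeasurable C (ae_of_all _ hb)

theorem kernelAverage_const (a : ℝ) : kernelAverage P (fun _ => a) = fun _ => a := by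
  funext x
  simp [kernelAverage]

theorem kernelAverage_const_add (hr : ∀ x, Integrable r (P x)) (a : ℝ) :
    kernelAverage P (fun y => a + r y) = fun x => a + kernelAverage P r x := by
  funext x
  simp [kernelAverage, integral_add (integrable_const a) (hr x)]

theorem norm_kernelAverage_le (hb : ∀ y, ‖r y‖ ≤ C) (x : X) : ‖kernelAverage P r x‖ ≤ C := by
  simpa [kernelAverage] using
    norm_integral_le_of_norm_le_const (μ := P x) (f := r) (ae_of_all _ hb)

theorem norm_iterate_kernelAverage_le (hb : ∀ y, ‖r y‖ ≤ C) (n : ℕ) (x : X) :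
    ‖(kernelAverage P)^[n] r x‖ ≤ C := by
  induction n generalizing x with
  | zero => exact hb x
  | succ n ih =>
    rw [Function.iterate_succ_apply']
    exact norm_kernelAverage_le ih x

theorem antitone_iterate_kernelAverage (hm : ∀ n, Measurable ((kernelAverage P)^[n] r))
    (hb : ∀ y, ‖r y‖ ≤ C) (hr : kernelAverage P r ≤ r) :
    Antitone fun n => (kernelAverage P)^[n] r := by
  have hi n x := integrable_of_norm_le (P := P) (hm n) (norm_iterate_kernelAverage_le hb n) x
  refine antitone_nat_of_succ_le fun n => ?_
  induction n with
  | zero => exact hr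
  | succ n ih =>
    calc (kernelAverage P)^[n + 2] r = kernelAverage P ((kernelAverage P)^[n + 1] r) :=
          Function.iterate_succ_apply' ..
      _ ≤ kernelAverage P ((kernelAverage P)^[n] r) := kernelAverage_mono (hi _) (hi _) ih
      _ = (kernelAverage P)^[n + 1] r := (Function.iterate_succ_apply' ..).symm

theorem kernelAverage_eq_of_tendsto_iterate {L : X → ℝ}
    (hm : ∀ n, Measurable ((kernelAverage P)^[n] r)) (hb : ∀ y, ‖r y‖ ≤ C)
    (hL : ∀ x, Tendsto (fun n => (kernelAverage P)^[n] r x) atTop (𝓝 (L x))) :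
    kernelAverage P L = L := by
  funext x
  have hP : Tendsto (fun n => kernelAverage P ((kernelAverage P)^[n] r) x) atTop
      (𝓝 (kernelAverage P L x)) :=
    tendsto_integral_of_dominated_convergence (fun _ => C) (fun n => (hm n).aestronglyMeasurable)
      (integrable_const C) (fun n => ae_of_all _ (norm_iterate_kernelAverage_le hb n))
      (ae_of_all _ hL)
  refine tendsto_nhds_unique hP ?_
  simp_rw [← Function.iterate_succ_apply' (kernelAverage P)]
  exact (hL x).comp (tendsto_add_atTop_nat 1)

variable [TopologicalSpace X] [OpensMeasurableSpace X]

theorem IsKernelOf.continuous_iterate_kernelAverage (hK : IsKernelOf P Φ)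
    (hSF : HasStrongFeller Φ) (hr : Continuous r) (hb : ∀ y, ‖r y‖ ≤ C) (n : ℕ) :
    Continuous ((kernelAverage P)^[n] r) := by
  induction n with
  | zero => exact hr
  | succ n ih =>
    rw [Function.iterate_succ']
    exact hK.continuous_kernelAverage hSF ih.measurable (norm_iterate_kernelAverage_le hb n)

theorem IsKernelOf.exists_continuous_tendsto_iterate_kernelAverage (hK : IsKernelOf P Φ)
    (hSF : HasStrongFeller Φ) (hr : Continuous r) (hb : ∀ y, ‖r y‖ ≤ C)
    (hsub : kernelAverage P r ≤ r) :
    ∃ L : X → ℝ, Continuous L ∧ (∀ y, ‖L y‖ ≤ C) ∧ kernelAverage P L = L ∧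
      ∀ y, Tendsto (fun n => (kernelAverage P)^[n] r y) atTop (𝓝 (L y)) := by
  have hm n := (hK.continuous_iterate_kernelAverage hSF hr hb n).measurable
  have hanti := antitone_iterate_kernelAverage hm hb hsub
  have hbdd y : BddBelow (Set.range fun n => (kernelAverage P)^[n] r y) :=
    ⟨-C, by rintro _ ⟨n, rfl⟩; exact neg_le_of_abs_le (norm_iterate_kernelAverage_le hb n y)⟩
  have hL y := tendsto_atTop_ciInf (fun _ _ h => hanti h y) (hbdd y)
  have hLb y := le_of_tendsto' (hL y).norm fun n => norm_iterate_kernelAverage_le hb n y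
  have hLfix := kernelAverage_eq_of_tendsto_iterate hm hb hL
  refine ⟨_, ?_, hLb, hLfix, hL⟩
  exact hLfix ▸ hK.continuous_kernelAverage hSF (Measurable.iInf hm) hLb

theorem IsKernelOf.continuous_and_norm_iterate_le (hK : IsKernelOf P Φ)
    (hSF : HasStrongFeller Φ) {f : X → ℂ} (hf : Continuous f) (hr : Continuous r)
    (hb : ∀ y, ‖r y‖ ≤ C) (hfr : ∀ y, ‖f y‖ ≤ r y) (n : ℕ) :
    Continuous (Φ^[n] f) ∧ ∀ y, ‖Φ^[n] f y‖ ≤ (kernelAverage P)^[n] r y := by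
  induction n with
  | zero => exact ⟨hf, hfr⟩
  | succ n ih =>
    obtain ⟨hcont, hle⟩ := ih
    have hrn := hK.continuous_iterate_kernelAverage hSF hr hb n
    have hbn : ∀ y, ‖Φ^[n] f y‖ ≤ C :=
      fun y => (hle y).trans (le_of_abs_le (norm_iterate_kernelAverage_le hb n y))
    rw [Function.iterate_succ', Function.iterate_succ']
    refine ⟨hSF _ hcont.measurable ⟨C, hbn⟩, fun x => ?_⟩
    rw [Function.comp_apply, Function.comp_apply, hK x _ hcont.measurable ⟨C, hbn⟩]
    refine (norm_integral_le_integral_norm _).trans (integral_mono ?_ ?_ hle)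
    · exact integrable_of_norm_le hcont.measurable.norm (by simpa using hbn) x
    · exact integrable_of_norm_le hrn.measurable (norm_iterate_kernelAverage_le hb n) x

end Kernel

theorem domRestrict_psiFun_iterate {K : Type*} {U : Set K} {Φ : (U → ℂ) → (U → ℂ)}
    (f : K → ℂ) (n : ℕ) : U.domRestrict ((psiFun U Φ)^[n] f) = Φ^[n] (U.domRestrict f) := by
  induction n with
  | zero => rfl
  | succ n ih =>
    rw [Function.iterate_succ_apply', Function.iterate_succ_apply', ← ih]
    funext v
    exact dif_pos v.2

theorem psiFun_iterate_of_notMem {K : Type*} {U : Set K} {Φ : (U → ℂ) → (U → ℂ)}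
    (f : K → ℂ) {x : K} (hx : x ∉ U) (n : ℕ) : (psiFun U Φ)^[n] f x = f x := by
  induction n with
  | zero => rfl
  | succ n ih => rw [Function.iterate_succ_apply', psiFun, dif_neg hx, ih]

section MaxExtend

variable {K : Type*} {U : Set K} {c : ℝ} {φ : U → ℝ}

noncomputable def maxExtend (U : Set K) (c : ℝ) (φ : U → ℝ) (x : K) : ℝ :=
  open Classical in if h : x ∈ U then max (φ ⟨x, h⟩) c else c

@[simp]
theorem maxExtend_coe (v : U) : maxExtend U c φ v = max (φ v) c := by
  simp [maxExtend]

theorem maxExtend_of_notMem {x : K} (hx : x ∉ U) : maxExtend U c φ x = c := by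
  simp [maxExtend, hx]

theorem continuous_maxExtend [TopologicalSpace K] (hU : IsOpen U) (hφ : Continuous φ)
    {V : Set K} (hV : IsOpen V) (hUV : Uᶜ ⊆ V) (hφV : ∀ v : U, ↑v ∈ V → φ v ≤ c) :
    Continuous (maxExtend U c φ) := by
  refine continuous_iff_continuousAt.2 fun x => ?_
  by_cases hx : x ∈ U
  · have hon : ContinuousOn (maxExtend U c φ) U := by
      rw [continuousOn_iff_continuous_domRestrict]
      convert hφ.max continuous_const using 1
      funext v
      exact maxExtend_coe v
    exact hon.continuousAt (hU.mem_nhds hx)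
  · refine continuousAt_const.congr (f := fun _ => c) ?_
    filter_upwards [hV.mem_nhds (hUV hx)] with y hy
    by_cases hyU : y ∈ U
    · change c = maxExtend U c φ (⟨y, hyU⟩ : U)
      rw [maxExtend_coe, max_eq_right (hφV ⟨y, hyU⟩ hy)]
    · exact (maxExtend_of_notMem hyU).symm

end MaxExtend

section Boundary

variable {K : Type*} [TopologicalSpace K] [CompactSpace K] [MeasurableSpace K]
  [OpensMeasurableSpace K] {U : Set K} {Φ : (U → ℂ) → (U → ℂ)} {P : U → Measure U}

theorem ContinuousMap.integrable_domRestrict [∀ v, IsProbabilityMeasure (P v)] (g : C(K, ℝ))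
    (v : U) : Integrable (U.domRestrict g) (P v) :=
  integrable_of_norm_le (g.continuous.comp continuous_subtype_val).measurable
    (fun w => g.norm_coe_le_norm w) v

theorem IsKernelOf.apply_domRestrict_ofReal (hK : IsKernelOf P Φ) (g : C(K, ℝ)) (v : U) :
    Φ (fun w => (g w : ℂ)) v = kernelAverage P (U.domRestrict g) v :=
  hK.apply_ofReal (g.continuous.comp continuous_subtype_val).measurable
    (fun w => g.norm_coe_le_norm w) v

theorem CondA.exists_real (hA : CondA U Φ) (hK : IsKernelOf P Φ) {b : K} (hb : b ∈ Uᶜ) :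
    ∃ r : C(K, ℝ), r b = 0 ∧ (∀ y, y ≠ b → r y < 0) ∧
      U.domRestrict r ≤ kernelAverage P (U.domRestrict r) := by
  obtain ⟨h, hb0, hneg, hsub⟩ := hA b hb
  have hlt : ∀ y, y ≠ b → (h y).re < 0 ∧ (h y).im = 0 := fun y hy => by
    simpa [Complex.lt_def] using hneg y hy
  have hreal : ∀ v : U, h v = ((h v).re : ℂ) := fun v =>
    Complex.ext rfl (by simp [(hlt v (ne_of_mem_of_not_mem v.2 hb)).2])
  let r : C(K, ℝ) := ⟨fun y => (h y).re, by fun_prop⟩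
  refine ⟨r, by simp [r, hb0], fun y hy => (hlt y hy).1, fun v => ?_⟩
  have hΦr : Φ (fun w => ((h w).re : ℂ)) v = kernelAverage P (U.domRestrict r) v :=
    hK.apply_domRestrict_ofReal r v
  have := hsub v
  rwa [funext fun w : U => hreal w, hreal v, hΦr, Complex.real_le_real] at this

theorem CondB.eq_of_le_kernelAverage (hB : CondB U Φ) (hK : IsKernelOf P Φ) {G : C(K, ℝ)}
    (hG : U.domRestrict G ≤ kernelAverage P (U.domRestrict G)) {z : K} (hz : z ∈ U)
    (hmax : ∀ x, G x ≤ G z) (x y : K) : G x = G y := by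
  have hsub : ∀ v : U, (G v : ℂ) ≤ Φ (fun w => (G w : ℂ)) v := fun v => by
    rw [hK.apply_domRestrict_ofReal, Complex.real_le_real]
    exact hG v
  exact Complex.ofReal_injective <| hB ⟨fun x => (G x : ℂ), by fun_prop⟩
    (fun x => Complex.ofReal_im _) hsub ⟨z, hz, fun x => Complex.real_le_real.2 (hmax x)⟩ x y

theorem IsKernelOf.exists_barrier (hK : IsKernelOf P Φ) (hA : CondA U Φ) {F : Set K}
    (hF : IsClosed F) (hFU : F ⊆ U) {b : K} (hb : b ∈ Uᶜ) :
    ∃ w : C(K, ℝ), (∀ x, 0 ≤ w x) ∧ w b = 0 ∧ (∀ x ∈ F, 1 ≤ w x) ∧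
      kernelAverage P (U.domRestrict w) ≤ U.domRestrict w := by
  obtain ⟨r, hrb, hneg, hsub⟩ := hA.exists_real hK hb
  have hr : ∀ y, r y ≤ 0 := fun y => by
    rcases eq_or_ne y b with rfl | hy
    exacts [hrb.le, (hneg y hy).le]
  obtain ⟨m, hm, hmF⟩ : ∃ m, 0 < m ∧ ∀ x ∈ F, m ≤ -r x :=
    hF.isCompact.exists_forall_le' (by fun_prop : Continuous fun x => -r x).continuousOn
      fun x hx => neg_pos.2 (hneg x (ne_of_mem_of_not_mem (hFU hx) hb))
  have hm' : -m⁻¹ ≤ 0 := by simp [hm.le]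
  refine ⟨(-m⁻¹) • r, fun x => ?_, by simp [hrb], fun x hx => ?_, fun v => ?_⟩
  · simpa using mul_nonneg_of_nonpos_of_nonpos hm' (hr x)
  · have := hmF x hx
    simp only [ContinuousMap.smul_apply, smul_eq_mul, neg_mul, ← mul_neg]
    rwa [le_inv_mul_iff₀ hm, mul_one]
  · change kernelAverage P (fun y => -m⁻¹ * r y) v ≤ -m⁻¹ * r v
    rw [kernelAverage_const_mul]
    exact mul_le_mul_of_nonpos_left (hsub v) hm'

variable [∀ v, IsProbabilityMeasure (P v)]

theorem IsKernelOf.exists_barrier_lt (hK : IsKernelOf P Φ) (hA : CondA U Φ) (hU : IsOpen U)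
    (hne : Uᶜ.Nonempty) {F : Set K} (hF : IsClosed F) (hFU : F ⊆ U) {δ : ℝ} (hδ : 0 < δ) :
    ∃ w : C(K, ℝ), (∀ x, 0 ≤ w x) ∧ (∀ x ∈ Uᶜ, w x < δ) ∧ (∀ x ∈ F, 1 ≤ w x) ∧
      kernelAverage P (U.domRestrict w) ≤ U.domRestrict w := by
  choose! W hW0 hWb hWF hWsub using fun b (hb : b ∈ Uᶜ) => hK.exists_barrier hA hF hFU hb
  obtain ⟨t, htU, hcover⟩ := hU.isClosed_compl.isCompact.elim_nhds_subcover
    (fun b => {x | W b x < δ}) fun b hb =>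
      (isOpen_lt (W b).continuous continuous_const).mem_nhds (by simp [hWb b hb, hδ])
  have ht : t.Nonempty := by
    obtain ⟨b, hb, -⟩ := Set.mem_iUnion₂.1 (hcover hne.some_mem)
    exact ⟨b, hb⟩
  refine ⟨t.inf' ht W, fun x => ?_, fun x hx => ?_, fun x hx => ?_, fun v => ?_⟩
  · simpa [ContinuousMap.inf'_apply] using fun b hb => hW0 b (htU b hb) x
  · obtain ⟨b, hb, hxb⟩ := Set.mem_iUnion₂.1 (hcover hx)
    simpa [ContinuousMap.inf'_apply] using ⟨b, hb, hxb⟩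
  · simpa [ContinuousMap.inf'_apply] using fun b hb => hWF b (htU b hb) x hx
  · simp only [Set.domRestrict_apply, ContinuousMap.inf'_apply, Finset.le_inf'_iff]
    refine fun b hb => le_trans ?_ (hWsub b (htU b hb) v)
    refine kernelAverage_mono (ContinuousMap.integrable_domRestrict _)
      (ContinuousMap.integrable_domRestrict _) (fun w => ?_) v
    change t.inf' ht W w ≤ W b w
    rw [ContinuousMap.inf'_apply]
    exact Finset.inf'_le _ hb

theorem IsKernelOf.le_of_le_kernelAverage (hK : IsKernelOf P Φ) (hU : IsOpen U)
    (hB : CondB U Φ) (hne : Uᶜ.Nonempty) {L : U → ℝ} (hLc : Continuous L) {C : ℝ}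
    (hLb : ∀ v, ‖L v‖ ≤ C) (hL : L ≤ kernelAverage P L) {V : Set K} (hV : IsOpen V)
    (hUV : Uᶜ ⊆ V) {c : ℝ} (hLV : ∀ v : U, ↑v ∈ V → L v ≤ c) (v : U) : L v ≤ c := by
  let G : C(K, ℝ) := ⟨maxExtend U c L, continuous_maxExtend hU hLc hV hUV hLV⟩
  have hGU : ∀ w : U, G w = max (L w) c := maxExtend_coe
  have hGc : ∀ x ∉ U, G x = c := fun x => maxExtend_of_notMem
  have hLi := integrable_of_norm_le (P := P) hLc.measurable hLb
  have hGi := ContinuousMap.integrable_domRestrict (P := P) G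
  have hGsub : U.domRestrict G ≤ kernelAverage P (U.domRestrict G) := fun w => by
    have hLG := kernelAverage_mono hLi hGi (fun y => (le_max_left _ _).trans_eq (hGU y).symm) w
    have hcG := kernelAverage_mono (fun _ => integrable_const c) hGi
      (fun y => (le_max_right _ _).trans_eq (hGU y).symm) w
    rw [kernelAverage_const] at hcG
    exact (hGU w).trans_le (max_le ((hL w).trans hLG) hcG)
  obtain ⟨z, hz⟩ := G.continuous.exists_forall_ge' hne.some (by simp)
  have hGv : G v ≤ c := by
    by_cases hzU : z ∈ U
    · rw [hB.eq_of_le_kernelAverage hK hGsub hzU hz v hne.some, hGc _ hne.some_mem]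
    · exact (hz v).trans (hGc z hzU).le
  exact (le_max_left _ _).trans ((maxExtend_coe v).symm.trans_le hGv)

theorem IsKernelOf.eventually_iterate_kernelAverage_lt (hK : IsKernelOf P Φ)
    (hSF : HasStrongFeller Φ) (hU : IsOpen U) (hB : CondB U Φ) (hne : Uᶜ.Nonempty)
    {g : C(K, ℝ)} (hg : kernelAverage P (U.domRestrict g) ≤ U.domRestrict g) {c : ℝ}
    (hgc : ∀ x ∈ Uᶜ, g x < c) {ε : ℝ} (hε : 0 < ε) :
    ∀ᶠ n in atTop, ∀ v, (kernelAverage P)^[n] (U.domRestrict g) v < c + ε := by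
  set r : ℕ → U → ℝ := fun n => (kernelAverage P)^[n] (U.domRestrict g)
  have hb : ∀ v : U, ‖g v‖ ≤ ‖g‖ := fun v => g.norm_coe_le_norm v
  have hgU : Continuous (U.domRestrict g) := g.continuous.comp continuous_subtype_val
  have hrc n : Continuous (r n) := hK.continuous_iterate_kernelAverage hSF hgU hb n
  have hanti : Antitone r := antitone_iterate_kernelAverage (fun n => (hrc n).measurable) hb hg
  obtain ⟨L, hLc, hLb, hLfix, hL⟩ :=
    hK.exists_continuous_tendsto_iterate_kernelAverage hSF hgU hb hg
  have hV : IsOpen {x | g x < c} := isOpen_lt g.continuous continuous_const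
  have hrV n (v : U) (hv : ↑v ∈ {x | g x < c}) : r n v ≤ c :=
    (hanti (Nat.zero_le n) v).trans (show g v < c from hv).le
  have hLV (v : U) (hv : ↑v ∈ {x | g x < c}) : L v ≤ c :=
    le_of_tendsto' (hL v) fun n => hrV n v hv
  have hLle := hK.le_of_le_kernelAverage hU hB hne hLc hLb hLfix.ge hV hgc hLV
  have hDini : TendstoUniformly (fun n => maxExtend U c (r n)) (maxExtend U c L) atTop := by
    refine Antitone.tendstoUniformly_of_forall_tendsto
      (fun n => continuous_maxExtend hU (hrc n) hV hgc (hrV n))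
      (fun m n hmn x => ?_) (continuous_maxExtend hU hLc hV hgc hLV) fun x => ?_
    all_goals by_cases hx : x ∈ U
    · simpa [← maxExtend_coe (⟨x, hx⟩ : U)] using max_le_max_right c (hanti hmn ⟨x, hx⟩)
    · simp [maxExtend_of_notMem hx]
    · simpa [← maxExtend_coe (⟨x, hx⟩ : U)] using (hL ⟨x, hx⟩).max tendsto_const_nhds
    · simp [maxExtend_of_notMem hx]
  have hLext : maxExtend U c L = fun _ => c := funext fun x => by
    by_cases hx : x ∈ U
    · exact (maxExtend_coe (⟨x, hx⟩ : U)).trans (max_eq_right (hLle _))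
    · exact maxExtend_of_notMem hx
  rw [hLext, Metric.tendstoUniformly_iff] at hDini
  filter_upwards [hDini ε hε] with n hn v
  have h := hn v
  rw [maxExtend_coe, Real.dist_eq, abs_lt] at h
  linarith [le_max_left (r n v) c]

theorem IsKernelOf.tendstoUniformly_iterate_domRestrict (hK : IsKernelOf P Φ)
    (hSF : HasStrongFeller Φ) (hU : IsOpen U) (hA : CondA U Φ) (hB : CondB U Φ)
    (hne : Uᶜ.Nonempty) {f : C(K, ℂ)} (hf : ∀ x ∈ Uᶜ, f x = 0) :
    TendstoUniformly (fun n => Φ^[n] (U.domRestrict f)) (fun _ => 0) atTop := by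
  rw [Metric.tendstoUniformly_iff]
  intro η hη
  set C := ‖f‖
  set ε := η / 3
  have hε : 0 < ε := by positivity
  have hFU : {x | ε ≤ ‖f x‖} ⊆ U := fun x hx => by
    by_contra hxU
    simp [hf x hxU] at hx
    linarith
  obtain ⟨w, hw0, hwδ, hwF, hwsub⟩ := hK.exists_barrier_lt hA hU hne
    (isClosed_le continuous_const (by fun_prop)) hFU (δ := ε / (C + 1)) (by positivity)
  let g : C(K, ℝ) := ⟨fun x => ε + C * w x, by fun_prop⟩
  have hfg (v : U) : ‖f v‖ ≤ g v := by
    change ‖f v‖ ≤ ε + C * w v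
    by_cases hv : ε ≤ ‖f v‖
    · nlinarith [f.norm_coe_le_norm v, hwF v hv, norm_nonneg f]
    · nlinarith [hw0 v, norm_nonneg f]
  have hgsub : kernelAverage P (U.domRestrict g) ≤ U.domRestrict g := fun v => by
    change kernelAverage P (fun y => ε + C * U.domRestrict w y) v ≤ ε + C * w v
    rw [kernelAverage_const_add fun v => (ContinuousMap.integrable_domRestrict w v).const_mul C,
      kernelAverage_const_mul]
    exact add_le_add_right (mul_le_mul_of_nonneg_left (hwsub v) (norm_nonneg f)) ε
  have hgc : ∀ x ∈ Uᶜ, g x < 2 * ε := fun x hx => by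
    have h := mul_le_mul_of_nonneg_left (hwδ x hx).le (norm_nonneg f)
    have : C * (ε / (C + 1)) < ε := by
      rw [mul_div_assoc', div_lt_iff₀ (by positivity)]
      nlinarith
    change ε + C * w x < 2 * ε
    linarith
  filter_upwards [hK.eventually_iterate_kernelAverage_lt hSF hU hB hne hgsub hgc hε] with n hn v
  rw [dist_zero_left]
  calc ‖Φ^[n] (U.domRestrict f) v‖ ≤ (kernelAverage P)^[n] (U.domRestrict g) v :=
        (hK.continuous_and_norm_iterate_le hSF (f.continuous.comp continuous_subtype_val)
          (g.continuous.comp continuous_subtype_val) (fun v => g.norm_coe_le_norm v) hfg n).2 v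
    _ < 2 * ε + ε := hn v
    _ = η := by ring

end Boundary

theorem stmt18_general {K : Type*} [MetricSpace K] [CompactSpace K]
    [MeasurableSpace K] [BorelSpace K]
    (U : Set K) (hUopen : IsOpen U)
    (hbd : ∃ a b : K, a ∈ Uᶜ ∧ b ∈ Uᶜ ∧ a ≠ b)
    (Φ : (↥U → ℂ) → (↥U → ℂ))
    (hM : IsMarkovOperator Φ) (hSF : HasStrongFeller Φ)
    (hA : CondA U Φ) (hB : CondB U Φ)
    (f : C(K, ℂ)) (hf : ∀ x ∈ Uᶜ, f x = 0) :
    TendstoUniformly (fun n x => (psiFun U Φ)^[n] ⇑f x)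
      (fun _ => (0 : ℂ)) atTop ∧
    TendstoUniformly (fun n (u : ↥U) => Φ^[n] (fun v : ↥U => f v.1) u)
      (fun _ => (0 : ℂ)) atTop := by
  obtain ⟨P, hP, hK⟩ := hM.exists_kernel
  obtain ⟨a, -, ha, -, -⟩ := hbd
  have hΦ := hK.tendstoUniformly_iterate_domRestrict hSF hUopen hA hB ⟨a, ha⟩ hf
  refine ⟨?_, hΦ⟩
  rw [Metric.tendstoUniformly_iff] at hΦ ⊢
  intro ε hε
  filter_upwards [hΦ ε hε] with n hn x
  by_cases hx : x ∈ U
  · have h := hn ⟨x, hx⟩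
    rw [← congrFun (domRestrict_psiFun_iterate (⇑f) n) ⟨x, hx⟩] at h
    exact h
  · simpa [psiFun_iterate_of_notMem _ hx, hf x hx] using hε

/-- If `f ∈ C(K)` vanishes identically on `∂U`, then
`{Ψⁿ f}` converges uniformly on `K` to `0`; equivalently `{Φⁿ (f_U)}`
converges uniformly on `U` to `0`. -/
theorem stmt18 {K : Type*} [MetricSpace K] [CompactSpace K]
    [MeasurableSpace K] [BorelSpace K]
    (U : Set K) (hUopen : IsOpen U) (hUdense : Dense U)
    (hbd : ∃ a b : K, a ∈ Uᶜ ∧ b ∈ Uᶜ ∧ a ≠ b)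
    (Φ : (↥U → ℂ) → (↥U → ℂ))
    (hM : IsMarkovOperator Φ) (hSF : HasStrongFeller Φ)
    (hA : CondA U Φ) (hB : CondB U Φ)
    (f : C(K, ℂ)) (hf : ∀ x ∈ Uᶜ, f x = 0) :
    TendstoUniformly (fun n x => (psiFun U Φ)^[n] ⇑f x)
      (fun _ => (0 : ℂ)) atTop ∧
    TendstoUniformly (fun n (u : ↥U) => Φ^[n] (fun v : ↥U => f v.1) u)
      (fun _ => (0 : ℂ)) atTop :=
  stmt18_general U hUopen hbd Φ hM hSF hA hB f hf
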